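/- Let M(x,y) = 4xy/(√x+√y)² and 0 < g < 1. Among all nonnegative sequences (c_n²) with ∑ c_n² = 1 and ∑ n c_n² = N, the geometric sequence c_n² = N^n/(N+1)^{n+1} maximizes G = ∑_{n=0}^∞ (n+1) M(c_n², g c_{n+1}²). -/

import Mathlib

/-- The mean function M(x,y) = 4xy/(√x+√y)². -/
noncomputable def meanM (x y : ℝ) : ℝ := 4 * x * y / (Real.sqrt x + Real.sqrt y) ^ 2

/-!
`M` is jointly concave and homogeneous of degree one, so it lies below each of its tangent
planes through the origin: for every `s ≥ 0`,
`M(x, y) ≤ (4 s³ x + 4 y) / (1 + s)³`, with equality on the ray `y = s² x`.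
Summing with weights `n + 1` bounds `G(p)` by `(4 s³ (N + 1) + 4 g N) / (1 + s)³`, a quantity
depending on `p` only through its normalisation and its mean. The geometric distribution has the
same normalisation and mean, and satisfies `g p_{n+1} = s² p_n` for `s² = g N / (N + 1)`,
so for this choice of `s` it attains the bound term by term.
-/

open Real

noncomputable def meanTangent (s x y : ℝ) : ℝ := (4 * s ^ 3 * x + 4 * y) / (1 + s) ^ 3

noncomputable def geomDist (N : ℝ) (n : ℕ) : ℝ := N ^ n / (N + 1) ^ (n + 1)

section Tangent

variable {s x y : ℝ}

theorem meanM_le_meanTangent (hs : 0 ≤ s) (hx : 0 ≤ x) (hy : 0 ≤ y) :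
    meanM x y ≤ meanTangent s x y := by
  obtain ⟨u, hu, rfl⟩ : ∃ u, 0 ≤ u ∧ u ^ 2 = x := ⟨√x, sqrt_nonneg x, sq_sqrt hx⟩
  obtain ⟨v, hv, rfl⟩ : ∃ v, 0 ≤ v ∧ v ^ 2 = y := ⟨√y, sqrt_nonneg y, sq_sqrt hy⟩
  rw [meanM, meanTangent, sqrt_sq hu, sqrt_sq hv]
  rcases (add_nonneg hu hv).eq_or_lt with huv | huv
  · rw [← huv, zero_pow two_ne_zero, div_zero]
    positivity
  rw [div_le_div_iff₀ (by positivity) (by positivity), ← sub_nonneg]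
  have gap : (4 * s ^ 3 * u ^ 2 + 4 * v ^ 2) * (u + v) ^ 2 - 4 * u ^ 2 * v ^ 2 * (1 + s) ^ 3
      = 4 * (v - s * u) ^ 2 * (v ^ 2 + 2 * (1 + s) * u * v + s * u ^ 2) := by ring
  rw [gap]
  positivity

theorem meanM_sq_mul_eq_meanTangent (hs : 0 ≤ s) (hx : 0 ≤ x) :
    meanM x (s ^ 2 * x) = meanTangent s x (s ^ 2 * x) := by
  obtain ⟨u, hu, rfl⟩ : ∃ u, 0 ≤ u ∧ u ^ 2 = x := ⟨√x, sqrt_nonneg x, sq_sqrt hx⟩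
  rw [meanM, meanTangent, ← mul_pow, sqrt_sq hu, sqrt_sq (mul_nonneg hs hu)]
  rcases hu.eq_or_lt with rfl | hu
  · simp
  field_simp
  ring

end Tangent

section Distribution

variable {p : ℕ → ℝ} {N : ℝ}

theorem hasSum_succ_mul (hp : HasSum p 1) (hpN : HasSum (fun n : ℕ => (n : ℝ) * p n) N) :
    HasSum (fun n : ℕ => ((n : ℝ) + 1) * p n) (N + 1) := by
  simpa only [add_mul, one_mul] using hpN.add hp

theorem hasSum_succ_mul_succ (hpN : HasSum (fun n : ℕ => (n : ℝ) * p n) N) :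
    HasSum (fun n : ℕ => ((n : ℝ) + 1) * p (n + 1)) N := by
  simpa using (hasSum_nat_add_iff' 1).2 hpN

theorem hasSum_succ_mul_meanTangent (s g : ℝ) (hp : HasSum p 1)
    (hpN : HasSum (fun n : ℕ => (n : ℝ) * p n) N) :
    HasSum (fun n : ℕ => ((n : ℝ) + 1) * meanTangent s (p n) (g * p (n + 1)))
      (meanTangent s (N + 1) (g * N)) := by
  have hf : (fun n : ℕ => ((n : ℝ) + 1) * meanTangent s (p n) (g * p (n + 1))) = fun n : ℕ =>
      4 * s ^ 3 / (1 + s) ^ 3 * (((n : ℝ) + 1) * p n)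
        + 4 * g / (1 + s) ^ 3 * (((n : ℝ) + 1) * p (n + 1)) := by
    ext n
    simp only [meanTangent]
    ring
  have hv : meanTangent s (N + 1) (g * N)
      = 4 * s ^ 3 / (1 + s) ^ 3 * (N + 1) + 4 * g / (1 + s) ^ 3 * N := by
    simp only [meanTangent]
    ring
  rw [hf, hv]
  exact ((hasSum_succ_mul hp hpN).mul_left _).add ((hasSum_succ_mul_succ hpN).mul_left _)

end Distribution

section Geometric

variable {N : ℝ}

theorem geomDist_eq (n : ℕ) : geomDist N n = (N / (N + 1)) ^ n / (N + 1) := by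
  rw [geomDist, div_pow, pow_succ, div_div]

theorem geomDist_nonneg (hN : 0 ≤ N) (n : ℕ) : 0 ≤ geomDist N n := by
  unfold geomDist
  positivity

theorem geomDist_succ (n : ℕ) : geomDist N (n + 1) = N / (N + 1) * geomDist N n := by
  rw [geomDist_eq, geomDist_eq, pow_succ]
  ring

theorem one_sub_div_add_one (hN : N + 1 ≠ 0) : 1 - N / (N + 1) = (N + 1)⁻¹ := by
  field_simp
  ring

theorem div_add_one_lt_one (hN : 0 ≤ N) : N / (N + 1) < 1 :=
  (div_lt_one (by linarith)).2 (lt_add_one N)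

theorem hasSum_geomDist (hN : 0 ≤ N) : HasSum (geomDist N) 1 := by
  have hN1 : 0 < N + 1 := by linarith
  have h := (hasSum_geometric_of_lt_one (by positivity) (div_add_one_lt_one hN)).div_const (N + 1)
  rwa [one_sub_div_add_one hN1.ne', inv_inv, div_self hN1.ne', ← funext geomDist_eq] at h

theorem hasSum_coe_mul_geomDist (hN : 0 ≤ N) :
    HasSum (fun n : ℕ => (n : ℝ) * geomDist N n) N := by
  have hN1 : 0 < N + 1 := by linarith
  have hr : ‖N / (N + 1)‖ < 1 := by
    rw [norm_of_nonneg (by positivity)]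
    exact div_add_one_lt_one hN
  have h := (hasSum_coe_mul_geometric_of_norm_lt_one hr).div_const (N + 1)
  have hv : N / (N + 1) / (1 - N / (N + 1)) ^ 2 / (N + 1) = N := by
    rw [one_sub_div_add_one hN1.ne']
    field_simp
  simp only [hv, mul_div_assoc, ← geomDist_eq] at h
  exact h

end Geometric

theorem tmsv_maximizes_general (g N : ℝ) (hg0 : 0 < g) (hN : 0 < N)
    (p : ℕ → ℝ) (hp : ∀ n, 0 ≤ p n)
    (hps : Summable p) (hpnorm : (∑' n, p n) = 1)
    (hpe : Summable fun n : ℕ => (n : ℝ) * p n)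
    (hpmean : (∑' n : ℕ, (n : ℝ) * p n) = N)
    (hG : Summable fun n : ℕ => ((n : ℝ) + 1) * meanM (p n) (g * p (n + 1))) :
    (∑' n : ℕ, ((n : ℝ) + 1) * meanM (p n) (g * p (n + 1)))
      ≤ ∑' n : ℕ, ((n : ℝ) + 1) *
          meanM (N ^ n / (N + 1) ^ (n + 1)) (g * (N ^ (n + 1) / (N + 1) ^ (n + 2))) := by
  set s := √(g * N / (N + 1))
  have hs : 0 ≤ s := sqrt_nonneg _
  have hs2 : s ^ 2 = g * N / (N + 1) := sq_sqrt (by positivity)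
  have hp1 : HasSum p 1 := hpnorm ▸ hps.hasSum
  have hpN : HasSum (fun n : ℕ => (n : ℝ) * p n) N := hpmean ▸ hpe.hasSum
  have hpG := hasSum_succ_mul_meanTangent s g hp1 hpN
  have hqG := hasSum_succ_mul_meanTangent s g
    (hasSum_geomDist hN.le) (hasSum_coe_mul_geomDist hN.le)
  calc (∑' n : ℕ, ((n : ℝ) + 1) * meanM (p n) (g * p (n + 1)))
      ≤ ∑' n : ℕ, ((n : ℝ) + 1) * meanTangent s (p n) (g * p (n + 1)) :=
        hG.tsum_le_tsum (fun n => mul_le_mul_of_nonneg_left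
          (meanM_le_meanTangent hs (hp n) (mul_nonneg hg0.le (hp (n + 1)))) (by positivity))
          hpG.summable
    _ = ∑' n : ℕ, ((n : ℝ) + 1) * meanTangent s (geomDist N n) (g * geomDist N (n + 1)) := by
        rw [hpG.tsum_eq, hqG.tsum_eq]
    _ = ∑' n : ℕ, ((n : ℝ) + 1) * meanM (geomDist N n) (g * geomDist N (n + 1)) := by
        refine tsum_congr fun n => ?_
        have hq : g * geomDist N (n + 1) = s ^ 2 * geomDist N n := by
          rw [geomDist_succ, hs2]
          ring
        rw [hq, meanM_sq_mul_eq_meanTangent hs (geomDist_nonneg hN.le n)]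
    _ = _ := rfl

/-- The geometric (TMSV) distribution maximizes G = ∑ (n+1) M(p_n, g p_{n+1})
    among probability distributions on ℕ with mean N. -/
theorem tmsv_maximizes (g N : ℝ) (hg0 : 0 < g) (hg1 : g < 1) (hN : 0 < N)
    (p : ℕ → ℝ) (hp : ∀ n, 0 ≤ p n)
    (hps : Summable p) (hpnorm : (∑' n, p n) = 1)
    (hpe : Summable fun n : ℕ => (n : ℝ) * p n)
    (hpmean : (∑' n : ℕ, (n : ℝ) * p n) = N)
    (hG : Summable fun n : ℕ => ((n : ℝ) + 1) * meanM (p n) (g * p (n + 1))) :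
    (∑' n : ℕ, ((n : ℝ) + 1) * meanM (p n) (g * p (n + 1)))
      ≤ ∑' n : ℕ, ((n : ℝ) + 1) *
          meanM (N ^ n / (N + 1) ^ (n + 1)) (g * (N ^ (n + 1) / (N + 1) ^ (n + 2))) :=
  tmsv_maximizes_general g N hg0 hN p hp hps hpnorm hpe hpmean hG
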